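/- arXiv:1910.02546 — 4 statements merged into one kernel-verified Lean document; each statement's English description precedes it below -/
import Mathlib

section
/- Let A, B be symmetric m×m matrices with B positive definite, G a d×m full-row-rank matrix with GAG' invertible. If G is a critical point of G ↦ log det(GAG') - log det(GBG') (i.e., the directional derivative vanishes in every direction η ∈ Mat(d,m)), then GA = γ·GB where γ = (GAG')(GBG')^{-1}. -/
open Matrix

theorem stmt6_general (m d : ℕ) (A B : Matrix (Fin m) (Fin m) ℝ)
    (G : Matrix (Fin d) (Fin m) ℝ)
    (hGA : IsUnit (G * A * Gᵀ))
    (hcrit : ∀ η : Matrix (Fin d) (Fin m) ℝ,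
      ((G * A * Gᵀ)⁻¹ * (G * A * ηᵀ)).trace
        = ((G * B * Gᵀ)⁻¹ * (G * B * ηᵀ)).trace) :
    G * A = (G * A * Gᵀ) * (G * B * Gᵀ)⁻¹ * (G * B) := by
  -- The trace pairing `(X, η) ↦ tr(X ηᵀ)` is nondegenerate, so the two gradients agree.
  have hgrad : (G * A * Gᵀ)⁻¹ * (G * A) = (G * B * Gᵀ)⁻¹ * (G * B) :=
    ext_iff_trace_mul_right.mpr fun x => by
      simpa only [Matrix.mul_assoc, transpose_transpose] using hcrit xᵀ
  rw [Matrix.mul_assoc _ (G * B * Gᵀ)⁻¹, ← hgrad, ← Matrix.mul_assoc,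
    mul_nonsing_inv _ ((isUnit_iff_isUnit_det _).mp hGA), Matrix.one_mul]

/-- At a critical point of `G ↦ log det(GAG') - log det(GBG')` (vanishing directional
derivative in every direction `η`), we have `GA = γ·GB` with `γ = (GAG')(GBG')⁻¹`. -/
theorem stmt6 (m d : ℕ) (A B : Matrix (Fin m) (Fin m) ℝ)
    (hA : A.IsSymm) (hBsymm : B.IsSymm) (hB : B.PosDef)
    (G : Matrix (Fin d) (Fin m) ℝ) (hG : G.rank = d)
    (hGA : IsUnit (G * A * Gᵀ))
    (hcrit : ∀ η : Matrix (Fin d) (Fin m) ℝ,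
      ((G * A * Gᵀ)⁻¹ * (G * A * ηᵀ)).trace
        = ((G * B * Gᵀ)⁻¹ * (G * B * ηᵀ)).trace) :
    G * A = (G * A * Gᵀ) * (G * B * Gᵀ)⁻¹ * (G * B) :=
  stmt6_general m d A B G hGA hcrit
end

section
/- Let F = ⊕_{r} K(r, d_r) be a nilpotent Jordan matrix and G an n×m matrix partitioned into blocks G_{r,j} (r the exponent, 0 ≤ j ≤ r-1, block G_{r,j} of size d_r × m) conformally with F. Define κ(G) as the block matrix with row blocks indexed by (r,l) (0 ≤ l ≤ r-1) and p column blocks, with κ(G)_{(r,l),i} = G_{r, r-l-i} if i ≤ r-l and 0 otherwise. If the stacked matrix G_{:,0} (rows of all blocks G_{r,0}) has full row rank, then κ(G) has full row rank. -/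
/-!
Order the row blocks `(r, l)` of `κ(G)` by their depth `r - l`. A row of depth `s` vanishes on
the column blocks `i > s`, and on block `s` it is the corresponding row of `G_{r,0}`. So `κ(G)`
is block triangular, and its diagonal blocks are row-subfamilies of the stacked matrix `G_{:,0}`,
which are linearly independent; a downward induction on the depth then kills every coefficient
of a vanishing linear combination of the rows of `κ(G)`.
-/

open Matrix

theorem Matrix.linearIndependent_row_iff_rank_eq_card {m n R : Type*} [Field R] [Fintype m]
    [Fintype n] (M : Matrix m n R) : LinearIndependent R M.row ↔ M.rank = Fintype.card m := by
  rw [linearIndependent_iff_card_eq_finrank_span, M.rank_eq_finrank_span_row, Set.finrank,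
    eq_comm]

theorem linearIndependent_of_blockTriangular {R M ι J : Type*} [Ring R] [AddCommGroup M]
    [Module R M] [Fintype ι] [LinearOrder J] [WellFoundedGT J] (v : ι → J → M) (s : ι → J)
    (hzero : ∀ x j, s x < j → v x j = 0)
    (hdiag : ∀ j, LinearIndependent R (fun x : {x // s x = j} => v x j)) :
    LinearIndependent R v := by
  classical
  rw [Fintype.linearIndependent_iff]
  intro g hg
  suffices ∀ j x, s x = j → g x = 0 from fun x => this _ x rfl
  intro j
  induction j using WellFoundedGT.induction with
  | _ j ih =>
  have hblock : ∑ x with s x = j, g x • v x j = 0 := by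
    have hcol := congrFun hg j
    simp only [Finset.sum_apply, Pi.smul_apply, Pi.zero_apply] at hcol
    rw [Finset.sum_filter_of_ne, hcol]
    intro x _ hx
    by_contra hne
    rcases lt_or_gt_of_ne hne with hlt | hgt
    · exact hx (by rw [hzero x j hlt, smul_zero])
    · exact hx (by rw [ih _ hgt x rfl, zero_smul])
  rw [Finset.sum_subtype (p := fun x => s x = j) _ (by simp)] at hblock
  intro x hx
  exact Fintype.linearIndependent_iff.mp (hdiag j) (fun y => g y) hblock ⟨x, hx⟩

/-- Row indices `(r, l, a)` of `κ(G)`: `r` encodes the exponent `r + 1`, and `l ≤ r`. -/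
abbrev JordanRow (p : ℕ) (d : Fin p → ℕ) : Type :=
  Σ r : Fin p, Fin ((r : ℕ) + 1) × Fin (d r)

namespace JordanRow

variable {p : ℕ} {d : Fin p → ℕ}

def depth (x : JordanRow p d) : Fin p :=
  ⟨x.1 - x.2.1, by omega⟩

def toStackRow (x : JordanRow p d) : Σ r : Fin p, Fin (d r) :=
  ⟨x.1, x.2.2⟩

theorem injective_toStackRow_of_depth_eq (i : Fin p) :
    Function.Injective fun x : {x : JordanRow p d // x.depth = i} => x.1.toStackRow := by
  rintro ⟨⟨r, l, a⟩, hx⟩ ⟨⟨r', l', a'⟩, hx'⟩ h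
  simp only [toStackRow, Sigma.mk.inj_iff] at h
  obtain ⟨rfl, h⟩ := h
  obtain rfl := eq_of_heq h
  simp only [depth, Fin.ext_iff] at hx hx'
  obtain rfl : l = l' := Fin.ext (by omega)
  rfl

end JordanRow

/-- If the stacked matrix `G_{:,0}` (the blocks `G_{r,0}` for all exponents `r`) has full
row rank, then `κ(G)` has full row rank. Here `r : Fin p` encodes the exponent `r+1`,
`i : Fin p` encodes the lag `i+1`, and `κ(G)_{(r,l),i} = G_{r, r-l-i}` when `i ≤ r-l`. -/
theorem stmt11 (p m : ℕ) (d : Fin p → ℕ)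
    (G : ∀ r : Fin p, Fin ((r : ℕ) + 1) → Matrix (Fin (d r)) (Fin m) ℝ)
    (κ : Matrix (Σ r : Fin p, Fin ((r : ℕ) + 1) × Fin (d r)) (Fin p × Fin m) ℝ)
    (hκ : ∀ (r : Fin p) (l : Fin ((r : ℕ) + 1)) (a : Fin (d r)) (i : Fin p) (c : Fin m),
      κ ⟨r, (l, a)⟩ (i, c) =
        if hle : (i : ℕ) + (l : ℕ) ≤ (r : ℕ) then
          G r ⟨(r : ℕ) - (l : ℕ) - (i : ℕ), by omega⟩ a c
        else 0)
    (stack : Matrix (Σ r : Fin p, Fin (d r)) (Fin m) ℝ)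
    (hstack : ∀ (r : Fin p) (a : Fin (d r)) (c : Fin m),
      stack ⟨r, a⟩ c = G r 0 a c)
    (hrank : stack.rank = Fintype.card (Σ r : Fin p, Fin (d r))) :
    κ.rank = Fintype.card (Σ r : Fin p, Fin ((r : ℕ) + 1) × Fin (d r)) := by
  have hzero : ∀ (x : JordanRow p d) i, x.depth < i → κ.row x ∘ (i, ·) = 0 := by
    rintro ⟨r, l, a⟩ i hi
    funext c
    simp only [Function.comp_apply, row_apply, hκ, Pi.zero_apply]
    exact dif_neg (by simp [JordanRow.depth, Fin.lt_def] at hi; omega)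
  have hdiag : ∀ (x : JordanRow p d) i, x.depth = i →
      κ.row x ∘ (i, ·) = stack.row x.toStackRow := by
    rintro ⟨r, l, a⟩ i rfl
    funext c
    simp only [Function.comp_apply, row_apply, hκ, hstack, JordanRow.depth, JordanRow.toStackRow]
    rw [dif_pos (by omega)]
    congr
    simp
  rw [← linearIndependent_row_iff_rank_eq_card] at hrank ⊢
  refine .of_comp (LinearEquiv.curry ℝ ℝ (Fin p) (Fin m)).toLinearMap ?_
  refine linearIndependent_of_blockTriangular _ JordanRow.depth hzero fun i => ?_
  have hrows : (fun x : {x : JordanRow p d // x.depth = i} => κ.row x ∘ (i, ·)) =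
      stack.row ∘ fun x => x.1.toStackRow :=
    funext fun x => hdiag x i x.2
  exact hrows ▸ hrank.comp _ (JordanRow.injective_toStackRow_of_depth_eq i)
end

section
/- Let G be an n×m real matrix partitioned into blocks G_{r,j} conformally with a nilpotent Jordan matrix F = ⊕ K(r, d_r), such that the stacked block G_{:,0} has full row rank 𝔩 = Σ d_r ≤ m. Then there exists an invertible matrix S commuting with F such that G° = SG satisfies G°_{:,0}·(G°_{:,0})' = I_𝔩. -/
/-!
Index the rows of the Jordan block `K(r+1, d_r)` by their level `r - i`, the distance from the
last row, so that `G_{:,0}` consists of the rows of level `0`. A matrix `L` on the level-`0`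
rows, applied simultaneously on every level, gives a matrix `levelShift 0 L`; the nilpotent `F`
is `levelShift 1 1`, which moves every level one step up. The two commute as soon as `L` only
combines a row of exponent `r + 1` with rows of exponents `≥ r + 1`, since only those blocks
still have rows at every level that occurs. Such an `L` with `L G_{:,0} G_{:,0}ᵀ Lᵀ = 1` is the
inverse LDL factor, normalised by `D^{-1/2}`, of the positive definite Gram matrix
`G_{:,0} G_{:,0}ᵀ` once the blocks are ordered by decreasing exponent: this is the LQ
factorization `G_{:,0} = L⁻¹ W`.
-/

open Matrix

namespace Matrix

theorem posDef_mul_transpose_of_rank_eq_card {n k : Type*} [Fintype n] [Fintype k]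
    {B : Matrix n k ℝ} (h : B.rank = Fintype.card n) : (B * Bᵀ).PosDef := by
  have hrows : LinearIndependent ℝ B.row :=
    linearIndependent_iff_card_eq_finrank_span.mpr <| by
      rw [Set.finrank, ← rank_eq_finrank_span_row, h]
  simpa only [conjTranspose_eq_transpose_of_trivial] using
    PosDef.mul_conjTranspose_self B (vecMul_injective_iff.mpr hrows)

theorem PosDef.exists_lowerTriangular_mul_mul_transpose_eq_one {n : Type*} [Fintype n]
    [LinearOrder n] [WellFoundedLT n] [LocallyFiniteOrderBot n] {A : Matrix n n ℝ}
    (hA : A.PosDef) : ∃ L : Matrix n n ℝ,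
      IsUnit L ∧ L.BlockTriangular OrderDual.toDual ∧ L * A * Lᵀ = 1 := by
  set P := LDL.lowerInv hA
  set D := LDL.diagEntries hA
  have hPAP : P * A * Pᵀ = diagonal D := by
    rw [← conjTranspose_eq_transpose_of_trivial]
    exact (LDL.diag_eq_lowerInv_conj hA).symm
  have hD : ∀ i, 0 < D i := by
    rw [← posDef_diagonal_iff, ← hPAP, ← conjTranspose_eq_transpose_of_trivial]
    exact hA.mul_mul_conjTranspose_same <| vecMul_injective_of_isUnit (isUnit_of_invertible P)
  have hP : P.BlockTriangular OrderDual.toDual := fun i j hij => LDL.lowerInv_triangular hA hij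
  set s : n → ℝ := fun i => (√(D i))⁻¹
  have hs (i : n) : s i * D i * s i = 1 := by
    rw [mul_right_comm, ← mul_inv, Real.mul_self_sqrt (hD i).le, inv_mul_cancel₀ (hD i).ne']
  refine ⟨diagonal s * P, ?_, fun i j hij => ?_, ?_⟩
  · refine (isUnit_diagonal.mpr ?_).mul (isUnit_of_invertible P)
    exact Pi.isUnit_iff.mpr fun i => (inv_pos.mpr (Real.sqrt_pos.mpr (hD i))).ne'.isUnit
  · rw [diagonal_mul, hP hij, mul_zero]
  · calc diagonal s * P * A * (diagonal s * P)ᵀ = diagonal s * (P * A * Pᵀ) * diagonal s := by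
          rw [transpose_mul, diagonal_transpose]; simp only [Matrix.mul_assoc]
      _ = 1 := by
          rw [hPAP, diagonal_mul_diagonal, diagonal_mul_diagonal, ← diagonal_one]
          exact congrArg diagonal (funext hs)

theorem exists_equiv_fin_lt_of_lt {ι α : Type*} [Fintype ι] [LinearOrder α] (b : ι → α) :
    ∃ e : ι ≃ Fin (Fintype.card ι), ∀ i j, b j < b i → e i < e j := by
  let key : ι → Lex (αᵒᵈ × Fin (Fintype.card ι)) :=
    fun i => toLex (OrderDual.toDual (b i), Fintype.equivFin ι i)
  let _ : LinearOrder ι := LinearOrder.lift' key fun i j h =>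
    (Fintype.equivFin ι).injective (congrArg (fun x => (ofLex x).2) h)
  refine ⟨(Fintype.orderIsoFinOfCardEq ι rfl).symm.toEquiv, fun i j h => ?_⟩
  exact (Fintype.orderIsoFinOfCardEq ι rfl).symm.strictMono <|
    Prod.Lex.toLex_lt_toLex.mpr (Or.inl h)

theorem PosDef.exists_blockTriangular_mul_mul_transpose_eq_one {ι α : Type*} [Fintype ι]
    [DecidableEq ι] [LinearOrder α] {A : Matrix ι ι ℝ} (hA : A.PosDef) (b : ι → α) :
    ∃ L : Matrix ι ι ℝ, IsUnit L ∧ L.BlockTriangular b ∧ L * A * Lᵀ = 1 := by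
  obtain ⟨e, he⟩ := exists_equiv_fin_lt_of_lt b
  obtain ⟨L, hLunit, hLtri, hLA⟩ :=
    (hA.submatrix e.symm.injective).exists_lowerTriangular_mul_mul_transpose_eq_one
  refine ⟨L.submatrix e e, ?_, fun i j hij => hLtri (he i j hij), ?_⟩
  · rw [isUnit_iff_isUnit_det, det_submatrix_equiv_self, ← isUnit_iff_isUnit_det]
    exact hLunit
  · calc L.submatrix e e * A * (L.submatrix e e)ᵀ
        = L.submatrix e e * (A.submatrix e.symm e.symm).submatrix e e * Lᵀ.submatrix e e := by
          simp
      _ = 1 := by rw [submatrix_mul_equiv, submatrix_mul_equiv, hLA, submatrix_one_equiv]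

end Matrix

namespace NilpotentJordan

variable {p : ℕ} {d : Fin p → ℕ} {R : Type*}

abbrev Idx (p : ℕ) (d : Fin p → ℕ) := Σ r : Fin p, Fin ((r : ℕ) + 1) × Fin (d r)

abbrev BlockIdx (p : ℕ) (d : Fin p → ℕ) := Σ r : Fin p, Fin (d r)

def level (a : Idx p d) : ℕ := a.1 - a.2.1

def blockIdx (a : Idx p d) : BlockIdx p d := ⟨a.1, a.2.2⟩

-- meaningful only for `j ≤ y.1`, because of truncated subtraction
def atLevel (y : BlockIdx p d) (j : ℕ) : Idx p d := ⟨y.1, (⟨y.1 - j, by omega⟩, y.2)⟩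

@[simp] lemma blockIdx_atLevel (y : BlockIdx p d) (j : ℕ) : blockIdx (atLevel y j) = y := rfl

lemma level_atLevel {y : BlockIdx p d} {j : ℕ} (h : j ≤ y.1) : level (atLevel y j) = j := by
  simp only [level, atLevel]; omega

lemma level_le (a : Idx p d) : level a ≤ a.1 := Nat.sub_le _ _

lemma eq_of_blockIdx_eq_of_level_eq {a c : Idx p d} (hb : blockIdx a = blockIdx c)
    (hl : level a = level c) : a = c := by
  obtain ⟨r, i, k⟩ := a
  obtain ⟨r', i', k'⟩ := c
  simp only [blockIdx, Sigma.mk.inj_iff] at hb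
  obtain ⟨rfl, hk⟩ := hb
  cases hk
  have : i = i' := Fin.ext (by simp only [level] at hl; omega)
  rw [this]

lemma sum_ite_level_eq {M : Type*} [AddCommMonoid M] (j : ℕ) (f : Idx p d → M) :
    ∑ a, (if level a = j then f a else 0) = ∑ y, if j ≤ y.1 then f (atLevel y j) else 0 := by
  simp only [Fintype.sum_sigma, Fintype.sum_prod_type]
  refine Finset.sum_congr rfl fun r _ => ?_
  rw [Finset.sum_comm]
  refine Finset.sum_congr rfl fun k _ => ?_
  split_ifs with hj
  · rw [Fintype.sum_eq_single ⟨r - j, by omega⟩]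
    · exact if_pos (by simp only [level]; omega)
    · intro i hi
      refine if_neg fun h => hi (Fin.ext ?_)
      simp only [level] at h ⊢
      omega
  · exact Finset.sum_eq_zero fun i _ => if_neg (by simp only [level]; omega)

variable [Semiring R]

def levelShift (k : ℕ) (L : Matrix (BlockIdx p d) (BlockIdx p d) R) :
    Matrix (Idx p d) (Idx p d) R :=
  fun a c => if level a = level c + k then L (blockIdx a) (blockIdx c) else 0

theorem levelShift_mul {k l : ℕ} {L₁ L₂ : Matrix (BlockIdx p d) (BlockIdx p d) R}
    (h₁ : L₁.BlockTriangular Sigma.fst) :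
    levelShift k L₁ * levelShift l L₂ = levelShift (k + l) (L₁ * L₂) := by
  ext a c
  have hterm (b : Idx p d) : levelShift k L₁ a b * levelShift l L₂ b c =
      if level b = level a - k then
        (if level a = level c + (k + l) then
          L₁ (blockIdx a) (blockIdx b) * L₂ (blockIdx b) (blockIdx c) else 0)
      else 0 := by
    simp only [levelShift]
    split_ifs <;> first | rfl | (exfalso; omega) | simp
  -- the blocks without a row at level `level a - k` have exponent below that of `a`
  have hlow (y : BlockIdx p d) (hy : ¬ level a - k ≤ y.1) : L₁ (blockIdx a) y = 0 :=
    h₁ (by have := level_le a; simp only [blockIdx]; omega)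
  rw [mul_apply, Finset.sum_congr rfl fun b _ => hterm b, sum_ite_level_eq, levelShift]
  split_ifs
  · rw [mul_apply]
    refine Finset.sum_congr rfl fun y _ => ?_
    split_ifs with hy
    · rfl
    · rw [hlow y hy, zero_mul]
  · simp

theorem levelShift_zero_one : levelShift 0 (1 : Matrix (BlockIdx p d) (BlockIdx p d) R) = 1 := by
  ext a c
  simp only [levelShift, add_zero, one_apply]
  by_cases h : a = c
  · simp [h]
  · rw [if_neg h]
    split_ifs with hl hb
    · exact absurd (eq_of_blockIdx_eq_of_level_eq hb hl) h
    all_goals rfl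

theorem levelShift_zero_commute {L : Matrix (BlockIdx p d) (BlockIdx p d) R}
    (hL : L.BlockTriangular Sigma.fst) :
    levelShift 0 L * levelShift 1 1 = levelShift 1 1 * levelShift 0 L := by
  rw [levelShift_mul hL, levelShift_mul blockTriangular_one, mul_one, one_mul]

theorem isUnit_levelShift_zero {K : Type*} [CommRing K]
    {L : Matrix (BlockIdx p d) (BlockIdx p d) K} (hL : L.BlockTriangular Sigma.fst)
    (hunit : IsUnit L) : IsUnit (levelShift 0 L) := by
  refine IsUnit.of_mul_eq_one (levelShift 0 L⁻¹) ?_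
  rw [levelShift_mul hL, mul_nonsing_inv L ((isUnit_iff_isUnit_det L).mp hunit),
    levelShift_zero_one]

theorem submatrix_levelShift_zero_mul {m : Type*} (L : Matrix (BlockIdx p d) (BlockIdx p d) R)
    (M : Matrix (Idx p d) m R) :
    (levelShift 0 L * M).submatrix (atLevel · 0) id = L * M.submatrix (atLevel · 0) id := by
  ext y c
  have hterm (b : Idx p d) : levelShift 0 L (atLevel y 0) b * M b c =
      if level b = 0 then L y (blockIdx b) * M b c else 0 := by
    simp only [levelShift, level_atLevel (Nat.zero_le _), add_zero, blockIdx_atLevel]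
    split_ifs <;> first | rfl | (exfalso; omega) | simp
  simp only [submatrix_apply, id, mul_apply, hterm, sum_ite_level_eq, Nat.zero_le, if_true,
    blockIdx_atLevel]

theorem jordan_eq_levelShift {F : Matrix (Idx p d) (Idx p d) R}
    (hF : ∀ a b : Idx p d, F a b = if _ : a.1 = b.1 then
          (if (a.2.1 : ℕ) + 1 = (b.2.1 : ℕ) ∧ (a.2.2 : ℕ) = (b.2.2 : ℕ) then 1 else 0)
        else 0) :
    F = levelShift 1 1 := by
  ext ⟨r, i, k⟩ ⟨r', i', k'⟩
  rw [hF]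
  simp only [levelShift, one_apply, blockIdx, level]
  by_cases hr : r = r'
  · subst hr
    simp only [Sigma.mk.inj_iff, heq_eq_eq, true_and, Fin.ext_iff, dite_true]
    have hi := i.isLt
    have hi' := i'.isLt
    split_ifs <;> first | rfl | (exfalso; omega)
  · simp [hr]

end NilpotentJordan

open NilpotentJordan

/-- `r : Fin p` encodes the exponent `r + 1`; within a Jordan block the row sub-blocks are
`G_{r,r-1}, …, G_{r,0}` from top to bottom, and `stack` is `G ↦ G_{:,0}`. -/
theorem stmt17 (p m : ℕ) (d : Fin p → ℕ)
    (F : Matrix (Σ r : Fin p, Fin ((r : ℕ) + 1) × Fin (d r))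
      (Σ r : Fin p, Fin ((r : ℕ) + 1) × Fin (d r)) ℝ)
    (hF : ∀ a b : Σ r : Fin p, Fin ((r : ℕ) + 1) × Fin (d r),
      F a b = if h : a.1 = b.1 then
          (if (a.2.1 : ℕ) + 1 = (b.2.1 : ℕ) ∧ (a.2.2 : ℕ) = (b.2.2 : ℕ) then 1 else 0)
        else 0)
    (G : Matrix (Σ r : Fin p, Fin ((r : ℕ) + 1) × Fin (d r)) (Fin m) ℝ)
    (stack : Matrix (Σ r : Fin p, Fin ((r : ℕ) + 1) × Fin (d r)) (Fin m) ℝ →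
      Matrix (Σ r : Fin p, Fin (d r)) (Fin m) ℝ)
    (hstackdef : ∀ M (ra : Σ r : Fin p, Fin (d r)) (c : Fin m),
      stack M ra c = M ⟨ra.1, (Fin.last (ra.1 : ℕ), ra.2)⟩ c)
    (hrank : (stack G).rank = Fintype.card (Σ r : Fin p, Fin (d r))) :
    ∃ S : Matrix (Σ r : Fin p, Fin ((r : ℕ) + 1) × Fin (d r))
        (Σ r : Fin p, Fin ((r : ℕ) + 1) × Fin (d r)) ℝ,
      IsUnit S ∧ S * F = F * S ∧
        stack (S * G) * (stack (S * G))ᵀ = 1 := by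
  have hstack (M : Matrix (Idx p d) (Fin m) ℝ) : stack M = M.submatrix (atLevel · 0) id :=
    Matrix.ext (hstackdef M)
  obtain ⟨L, hLunit, hLtri, hLA⟩ :=
    (posDef_mul_transpose_of_rank_eq_card hrank).exists_blockTriangular_mul_mul_transpose_eq_one
      Sigma.fst
  refine ⟨levelShift 0 L, isUnit_levelShift_zero hLtri hLunit, ?_, ?_⟩
  · rw [jordan_eq_levelShift hF]
    exact levelShift_zero_commute hLtri
  · rw [hstack, submatrix_levelShift_zero_mul, ← hstack, transpose_mul, ← Matrix.mul_assoc,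
      Matrix.mul_assoc L, hLA]
end

section
/- Let A be symmetric positive semidefinite and B symmetric positive definite, both N×N, and let λ_min, λ_max be the smallest and largest eigenvalues of B^{-1/2}AB^{-1/2}. Then for any n×N matrix M of full row rank n, λ_min^n ≤ det(MAM')/det(MBM') ≤ λ_max^n. -/
open Matrix

section

open scoped ComplexOrder

/-- The square root of a positive semidefinite matrix, as defined in Mathlib (Dec 2024). -/
noncomputable def Matrix.PosSemidef.sqrt {n 𝕜 : Type*} [Fintype n] [DecidableEq n] [RCLike 𝕜]
    {A : Matrix n n 𝕜} (hA : A.PosSemidef) : Matrix n n 𝕜 :=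
  (hA.1.eigenvectorUnitary : Matrix n n 𝕜) * diagonal ((↑) ∘ (√·) ∘ hA.1.eigenvalues) *
    (star hA.1.eigenvectorUnitary : Matrix n n 𝕜)

end

/-!
With `S = B^{1/2}` and `C = S⁻¹ A S⁻¹`, the spectral bounds `λ_min • 1 ≤ C ≤ λ_max • 1`
conjugate by `S` to the Loewner sandwich `λ_min • B ≤ A ≤ λ_max • B`, and then by `M` to
`λ_min • MBMᵀ ≤ MAMᵀ ≤ λ_max • MBMᵀ`. The determinant is monotone on positive semidefinite
matrices (for `0 < X ≤ Y`, `X^{-1/2} Y X^{-1/2} ≥ 1` has all eigenvalues `≥ 1`), and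
`det (c • X) = c ^ n * det X`. Full row rank of `M` makes `MBMᵀ` positive definite, so its
determinant can be divided by.
-/

theorem Matrix.vecMul_injective_of_rank_eq_card {K m n : Type*} [Field K] [Fintype m]
    [Fintype n] {M : Matrix m n K} (hM : M.rank = Fintype.card m) :
    Function.Injective M.vecMul := by
  have hker : Module.finrank K (LinearMap.ker Mᵀ.mulVecLin) = 0 := by
    have := LinearMap.finrank_range_add_finrank_ker Mᵀ.mulVecLin
    rw [← rank, rank_transpose, hM, Module.finrank_fintype_fun_eq_card] at this
    omega
  have hinj : Function.Injective Mᵀ.mulVecLin :=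
    LinearMap.ker_eq_bot.mp (Submodule.finrank_eq_zero.mp hker)
  intro x y hxy
  exact hinj (by simpa [mulVec_transpose] using hxy)

namespace Matrix

open scoped ComplexOrder MatrixOrder

variable {m n 𝕜 : Type*} [Fintype m] [Fintype n] [RCLike 𝕜]

theorem mul_mul_conjTranspose_le_mul_mul_conjTranspose {X Y : Matrix n n 𝕜} (h : X ≤ Y)
    (M : Matrix m n 𝕜) : M * X * Mᴴ ≤ M * Y * Mᴴ := by
  rw [le_iff, ← Matrix.sub_mul, ← Matrix.mul_sub]
  exact h.mul_mul_conjTranspose_same M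

section

variable [DecidableEq n]

theorem PosSemidef.sqrt_eq_cfcSqrt {A : Matrix n n 𝕜} (hA : A.PosSemidef) :
    hA.sqrt = CFC.sqrt A := by
  rw [CFC.sqrt_eq_real_sqrt A hA.nonneg, cfcₙ_eq_cfc, hA.1.cfc_eq, IsHermitian.cfc,
    Unitary.conjStarAlgAut_apply, PosSemidef.sqrt]

theorem smul_one_le_of_le_eigenvalues {C : Matrix n n 𝕜} (hC : C.IsHermitian) {a : ℝ}
    (h : ∀ i, a ≤ hC.eigenvalues i) : a • 1 ≤ C := by
  rw [← Algebra.algebraMap_eq_smul_one, algebraMap_le_iff_le_spectrum (a := C) hC,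
    hC.spectrum_real_eq_range_eigenvalues]
  rintro _ ⟨i, rfl⟩
  exact h i

theorem le_smul_one_of_eigenvalues_le {C : Matrix n n 𝕜} (hC : C.IsHermitian) {b : ℝ}
    (h : ∀ i, hC.eigenvalues i ≤ b) : C ≤ b • 1 := by
  rw [← Algebra.algebraMap_eq_smul_one, le_algebraMap_iff_spectrum_le (a := C) hC,
    hC.spectrum_real_eq_range_eigenvalues]
  rintro _ ⟨i, rfl⟩
  exact h i

theorem one_le_det_of_one_le {Z : Matrix n n 𝕜} (hZ : 1 ≤ Z) : 1 ≤ Z.det := by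
  have hZh : Z.IsHermitian := by simpa using hZ.isHermitian.add isHermitian_one
  have hspec : ∀ x ∈ spectrum ℝ Z, 1 ≤ x :=
    (algebraMap_le_iff_le_spectrum (r := (1 : ℝ)) (a := Z) hZh).mp (by simpa using hZ)
  rw [hZh.det_eq_prod_eigenvalues, ← RCLike.ofReal_prod, ← RCLike.ofReal_one,
    RCLike.ofReal_le_ofReal]
  exact Finset.one_le_prod fun i _ => hspec _ (hZh.eigenvalues_mem_spectrum_real i)

theorem det_le_det_of_le {X Y : Matrix n n 𝕜} (hX : 0 ≤ X) (hXY : X ≤ Y) : X.det ≤ Y.det := by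
  rw [nonneg_iff_posSemidef] at hX
  by_cases hXd : X.PosDef
  · set R := CFC.sqrt X
    have hR : IsUnit R.det :=
      (isUnit_iff_isUnit_det R).mp ((CFC.isUnit_sqrt_iff X).mpr hXd.isUnit)
    have hRR : R * R = X := CFC.sqrt_mul_sqrt_self X
    have hZ : 1 ≤ R⁻¹ * Y * R⁻¹ := by
      have hRinv : IsSelfAdjoint R⁻¹ := (CFC.sqrt_nonneg X).isSelfAdjoint.isHermitian.inv
      convert hRinv.conjugate_le_conjugate hXY
      rw [← hRR, ← mul_assoc, nonsing_inv_mul _ hR, one_mul, mul_nonsing_inv _ hR]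
    have hY : Y = R * (R⁻¹ * Y * R⁻¹) * R := by
      simp only [← mul_assoc, mul_nonsing_inv _ hR, one_mul, mul_assoc _ R⁻¹ R,
        nonsing_inv_mul _ hR, mul_one]
    rw [hY, det_mul, det_mul, mul_right_comm, ← det_mul, hRR]
    exact le_mul_of_one_le_right hX.det_nonneg (one_le_det_of_one_le hZ)
  · rw [hX.posDef_iff_det_ne_zero, not_not] at hXd
    rw [hXd]
    exact (nonneg_iff_posSemidef.mp (hX.nonneg.trans hXY)).det_nonneg

theorem sqrt_mul_conj_inv_sqrt_mul_sqrt {B : Matrix n n 𝕜} (hB : B.PosDef) (A : Matrix n n 𝕜) :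
    CFC.sqrt B * ((CFC.sqrt B)⁻¹ * A * (CFC.sqrt B)⁻¹) * CFC.sqrt B = A := by
  have hS : IsUnit (CFC.sqrt B).det :=
    (isUnit_iff_isUnit_det _).mp ((CFC.isUnit_sqrt_iff B).mpr hB.isUnit)
  simp only [← mul_assoc, mul_nonsing_inv _ hS, one_mul, mul_assoc _ (CFC.sqrt B)⁻¹,
    nonsing_inv_mul _ hS, mul_one]

theorem smul_le_of_smul_one_le_conj_inv_sqrt {A B : Matrix n n 𝕜} (hB : B.PosDef) {a : ℝ}
    (h : a • 1 ≤ (CFC.sqrt B)⁻¹ * A * (CFC.sqrt B)⁻¹) : a • B ≤ A := by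
  have := (CFC.sqrt_nonneg B).isSelfAdjoint.conjugate_le_conjugate h
  rwa [sqrt_mul_conj_inv_sqrt_mul_sqrt hB, mul_smul_comm, mul_one, smul_mul_assoc,
    CFC.sqrt_mul_sqrt_self B hB.posSemidef.nonneg] at this

theorem le_smul_of_conj_inv_sqrt_le_smul_one {A B : Matrix n n 𝕜} (hB : B.PosDef) {b : ℝ}
    (h : (CFC.sqrt B)⁻¹ * A * (CFC.sqrt B)⁻¹ ≤ b • 1) : A ≤ b • B := by
  have := (CFC.sqrt_nonneg B).isSelfAdjoint.conjugate_le_conjugate h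
  rwa [sqrt_mul_conj_inv_sqrt_mul_sqrt hB, mul_smul_comm, mul_one, smul_mul_assoc,
    CFC.sqrt_mul_sqrt_self B hB.posSemidef.nonneg] at this

end

variable [DecidableEq m]

theorem pow_mul_det_le_det_mul_mul_conjTranspose {A B : Matrix n n 𝕜} {a : 𝕜} (ha : 0 ≤ a)
    (hB : 0 ≤ B) (h : a • B ≤ A) (M : Matrix m n 𝕜) :
    a ^ Fintype.card m * (M * B * Mᴴ).det ≤ (M * A * Mᴴ).det := by
  rw [← det_smul, ← Matrix.smul_mul, ← Matrix.mul_smul]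
  refine det_le_det_of_le ?_ (mul_mul_conjTranspose_le_mul_mul_conjTranspose h M)
  exact (nonneg_iff_posSemidef.mp (smul_nonneg ha hB)).mul_mul_conjTranspose_same M |>.nonneg

theorem det_mul_mul_conjTranspose_le_pow_mul_det {A B : Matrix n n 𝕜} {b : 𝕜} (hA : 0 ≤ A)
    (h : A ≤ b • B) (M : Matrix m n 𝕜) :
    (M * A * Mᴴ).det ≤ b ^ Fintype.card m * (M * B * Mᴴ).det := by
  rw [← det_smul, ← Matrix.smul_mul, ← Matrix.mul_smul]
  refine det_le_det_of_le ?_ (mul_mul_conjTranspose_le_mul_mul_conjTranspose h M)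
  exact (nonneg_iff_posSemidef.mp hA).mul_mul_conjTranspose_same M |>.nonneg

end Matrix

open scoped MatrixOrder

/-- Boundedness of the generalized Rayleigh quotient: if `λ_min`, `λ_max` are the
smallest and largest eigenvalues of `B^{-1/2} A B^{-1/2}`, then for any full-row-rank
`M`, `λ_min^n ≤ det(MAM')/det(MBM') ≤ λ_max^n`. -/
theorem stmt18 (N n : ℕ) (A B : Matrix (Fin N) (Fin N) ℝ)
    (hA : A.PosSemidef) (hB : B.PosDef)
    (C : Matrix (Fin N) (Fin N) ℝ)
    (hC : C = (PosSemidef.sqrt hB.posSemidef)⁻¹ * A * (PosSemidef.sqrt hB.posSemidef)⁻¹)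
    (hCh : C.IsHermitian)
    (lmin lmax : ℝ)
    (hmin : IsLeast (Set.range hCh.eigenvalues) lmin)
    (hmax : IsGreatest (Set.range hCh.eigenvalues) lmax)
    (M : Matrix (Fin n) (Fin N) ℝ) (hM : M.rank = n) :
    lmin ^ n ≤ (M * A * Mᵀ).det / (M * B * Mᵀ).det ∧
      (M * A * Mᵀ).det / (M * B * Mᵀ).det ≤ lmax ^ n := by
  rw [PosSemidef.sqrt_eq_cfcSqrt] at hC
  have hlow : lmin • B ≤ A := smul_le_of_smul_one_le_conj_inv_sqrt hB <|
    hC ▸ smul_one_le_of_le_eigenvalues hCh fun i => hmin.2 ⟨i, rfl⟩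
  have hup : A ≤ lmax • B := le_smul_of_conj_inv_sqrt_le_smul_one hB <|
    hC ▸ le_smul_one_of_eigenvalues_le hCh fun i => hmax.2 ⟨i, rfl⟩
  have hlmin : 0 ≤ lmin := by
    have hCpsd : C.PosSemidef := nonneg_iff_posSemidef.mp <| hC ▸
      IsSelfAdjoint.conjugate_nonneg hA.nonneg (CFC.sqrt_nonneg B).isSelfAdjoint.isHermitian.inv
    obtain ⟨i, rfl⟩ := hmin.1
    exact hCpsd.eigenvalues_nonneg i
  have hD : 0 < (M * B * Mᴴ).det :=
    (hB.mul_mul_conjTranspose_same (vecMul_injective_of_rank_eq_card (by simpa using hM))).det_pos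
  have hlower := pow_mul_det_le_det_mul_mul_conjTranspose hlmin hB.posSemidef.nonneg hlow M
  have hupper := det_mul_mul_conjTranspose_le_pow_mul_det hA.nonneg hup M
  simp only [conjTranspose_eq_transpose_of_trivial, Fintype.card_fin] at hD hlower hupper
  exact ⟨(le_div_iff₀ hD).mpr hlower, (div_le_iff₀ hD).mpr hupper⟩
end
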